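/- For a metric space M with base point 0 and distinct points p, q ∈ M with base point 0 = q, the function f_{pq}(t) = (d(p,q)/2)·((d(t,q) - d(t,p))/(d(t,q) + d(t,p)) - (d(0,q) - d(0,p))/(d(0,q) + d(0,p))) is Lipschitz with Lipschitz constant at most 1 and satisfies f_{pq}(0) = 0. -/

import Mathlib

noncomputable section

open Metric Set

/-- The space of real-valued Lipschitz functions on `M` vanishing at `base`. -/
structure Lip0 (M : Type*) [MetricSpace M] (base : M) where
  toFun : M → ℝ
  exists_lip' : ∃ K, LipschitzWith K toFun
  map_base' : toFun base = 0

namespace Lip0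

variable {M : Type*} [MetricSpace M] {base : M}

instance : FunLike (Lip0 M base) M ℝ where
  coe := toFun
  coe_injective := by rintro ⟨f, _, _⟩ ⟨g, _, _⟩ h; simpa using h

@[simp] lemma map_base (f : Lip0 M base) : f base = 0 := f.map_base'

/-- The set of (nonnegative real) Lipschitz constants of `f`. -/
def lipSet (f : Lip0 M base) : Set ℝ :=
  {K | 0 ≤ K ∧ ∀ x y, |f x - f y| ≤ K * dist x y}

lemma lipSet_nonempty (f : Lip0 M base) : (lipSet f).Nonempty := by
  obtain ⟨K, hK⟩ := f.exists_lip'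
  exact ⟨K, K.coe_nonneg, fun x y => by
    have h := hK.dist_le_mul x y; rw [Real.dist_eq] at h; exact h⟩

lemma lipSet_bddBelow (f : Lip0 M base) : BddBelow (lipSet f) :=
  ⟨0, fun K hK => hK.1⟩

lemma sInf_mem_lipSet (f : Lip0 M base) : sInf (lipSet f) ∈ lipSet f := by
  constructor
  · exact le_csInf (lipSet_nonempty f) fun K hK => hK.1
  · intro x y
    rcases eq_or_ne x y with rfl | hxy
    · simp
    · have hd : 0 < dist x y := dist_pos.2 hxy
      rw [← div_le_iff₀ hd]
      exact le_csInf (lipSet_nonempty f) fun K hK => (div_le_iff₀ hd).2 (hK.2 x y)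

instance : Zero (Lip0 M base) :=
  ⟨⟨fun _ => 0, ⟨0, LipschitzWith.const 0⟩, rfl⟩⟩

instance : Add (Lip0 M base) :=
  ⟨fun f g => ⟨fun t => f t + g t, by
    obtain ⟨Kf, hf⟩ := f.exists_lip'; obtain ⟨Kg, hg⟩ := g.exists_lip'
    exact ⟨Kf + Kg, hf.add hg⟩, by simp⟩⟩

instance : Neg (Lip0 M base) :=
  ⟨fun f => ⟨fun t => -f t, by
    obtain ⟨Kf, hf⟩ := f.exists_lip'
    exact ⟨Kf, hf.neg⟩, by simp⟩⟩

def rsmul (c : ℝ) (f : Lip0 M base) : Lip0 M base :=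
  ⟨fun t => c * f t, by
    obtain ⟨Kf, hf⟩ := f.exists_lip'
    refine ⟨⟨|c|, abs_nonneg c⟩ * Kf, LipschitzWith.of_dist_le_mul fun x y => ?_⟩
    have h1 : dist (c * f x) (c * f y) = |c| * |f x - f y| := by
      rw [Real.dist_eq, ← abs_mul, mul_sub]
    have h2 := hf.dist_le_mul x y
    rw [Real.dist_eq] at h2
    rw [h1]
    calc |c| * |f x - f y| ≤ |c| * (Kf * dist x y) :=
          mul_le_mul_of_nonneg_left h2 (abs_nonneg c)
      _ = (⟨|c|, abs_nonneg c⟩ * Kf : NNReal) * dist x y := by show |c| * (↑Kf * dist x y) = |c| * ↑Kf * dist x y; ring, by simp⟩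

instance : SMul ℝ (Lip0 M base) := ⟨rsmul⟩
instance : SMul ℕ (Lip0 M base) := ⟨fun n => rsmul (n : ℝ)⟩
instance : SMul ℤ (Lip0 M base) := ⟨fun n => rsmul (n : ℝ)⟩
instance : Sub (Lip0 M base) := ⟨fun f g => f + -g⟩

@[simp] lemma coe_zero : ⇑(0 : Lip0 M base) = fun _ => 0 := rfl
@[simp] lemma coe_add (f g : Lip0 M base) : ⇑(f + g) = fun t => f t + g t := rfl
@[simp] lemma coe_neg (f : Lip0 M base) : ⇑(-f) = fun t => -f t := rfl
@[simp] lemma coe_smul (c : ℝ) (f : Lip0 M base) : ⇑(c • f) = fun t => c * f t := rfl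
@[simp] lemma coe_sub (f g : Lip0 M base) : ⇑(f - g) = fun t => f t - g t := by
  show (fun t => f t + -(g t)) = _
  funext t; ring

instance : AddCommGroup (Lip0 M base) :=
  (DFunLike.coe_injective (F := Lip0 M base)).addCommGroup _
    rfl (fun _ _ => rfl) (fun _ => rfl) (fun f g => coe_sub f g)
    (fun f n => by funext t; show (n : ℝ) * f t = n • f t; simp)
    (fun f n => by funext t; show (n : ℝ) * f t = n • f t; simp)

instance : Module ℝ (Lip0 M base) :=
  (DFunLike.coe_injective (F := Lip0 M base)).module ℝ
    { toFun := fun f : Lip0 M base => ⇑f, map_zero' := rfl, map_add' := fun _ _ => rfl }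
    (fun _ _ => rfl)

lemma lipSet_neg (f : Lip0 M base) : lipSet (-f) = lipSet f := by
  unfold lipSet
  ext K
  have e : ∀ x y : M, (-f) x - (-f) y = -(f x - f y) := fun x y => by
    show -f x - -f y = -(f x - f y); ring
  constructor <;> rintro ⟨h0, h⟩ <;> refine ⟨h0, fun x y => ?_⟩
  · have := h x y; rwa [e, abs_neg] at this
  · rw [e, abs_neg]; exact h x y

instance : NormedAddCommGroup (Lip0 M base) :=
  AddGroupNorm.toNormedAddCommGroup
  { toFun := fun f => sInf (lipSet f)
    map_zero' := by
      apply le_antisymm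
      · exact csInf_le (lipSet_bddBelow _) ⟨le_refl 0, fun x y => by simp⟩
      · exact (sInf_mem_lipSet (0 : Lip0 M base)).1
    add_le' := fun f g => by
      apply csInf_le (lipSet_bddBelow _)
      refine ⟨add_nonneg (sInf_mem_lipSet f).1 (sInf_mem_lipSet g).1, fun x y => ?_⟩
      have hf := (sInf_mem_lipSet f).2 x y
      have hg := (sInf_mem_lipSet g).2 x y
      calc |(f + g) x - (f + g) y| = |(f x - f y) + (g x - g y)| := by
            simp [coe_add]; ring_nf
        _ ≤ |f x - f y| + |g x - g y| := abs_add_le _ _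
        _ ≤ sInf (lipSet f) * dist x y + sInf (lipSet g) * dist x y := add_le_add hf hg
        _ = (sInf (lipSet f) + sInf (lipSet g)) * dist x y := by ring
    neg' := fun f => by show sInf (lipSet (-f)) = sInf (lipSet f); rw [lipSet_neg]
    eq_zero_of_map_eq_zero' := fun f hf => by
      have hf' : sInf (lipSet f) = 0 := hf
      apply DFunLike.coe_injective
      funext t
      have h := (sInf_mem_lipSet f).2 t base
      rw [hf', zero_mul] at h
      have h0 : f t - f base = 0 := abs_nonpos_iff.1 h
      show f t = (0 : Lip0 M base) t
      have : (0 : Lip0 M base) t = 0 := rfl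
      rw [this]
      simpa using h0 }

lemma norm_def (f : Lip0 M base) : ‖f‖ = sInf (lipSet f) := rfl

instance : NormedSpace ℝ (Lip0 M base) where
  norm_smul_le c f := by
    rw [norm_def, norm_def, Real.norm_eq_abs]
    apply csInf_le (lipSet_bddBelow _)
    refine ⟨mul_nonneg (abs_nonneg c) (sInf_mem_lipSet f).1, fun x y => ?_⟩
    have hf := (sInf_mem_lipSet f).2 x y
    calc |(c • f) x - (c • f) y| = |c| * |f x - f y| := by
          rw [coe_smul]; rw [← abs_mul]; ring_nf
      _ ≤ |c| * (sInf (lipSet f) * dist x y) :=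
          mul_le_mul_of_nonneg_left hf (abs_nonneg c)
      _ = |c| * sInf (lipSet f) * dist x y := by ring

lemma norm_apply_le (f : Lip0 M base) (x y : M) : |f x - f y| ≤ ‖f‖ * dist x y :=
  (sInf_mem_lipSet f).2 x y

end Lip0

open Lip0 NormedSpace

variable (M : Type*) [MetricSpace M]

/-- The Dirac evaluation functional at `x`. -/
def deltaF (base x : M) : StrongDual ℝ (Lip0 M base) :=
  LinearMap.mkContinuous
    { toFun := fun f => f x
      map_add' := fun _ _ => rfl
      map_smul' := fun _ _ => rfl }
    (dist x base)
    (fun f => by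
      have h := Lip0.norm_apply_le f x base
      simp only [Lip0.map_base, sub_zero] at h
      change ‖f x‖ ≤ _
      simpa [Real.norm_eq_abs, mul_comm] using h)

variable {M}

@[simp] lemma deltaF_apply (base x : M) (f : Lip0 M base) : deltaF M base x f = f x := rfl

/-- The molecule `(δ x - δ y)/d(x,y)`. -/
def molecule (base x y : M) : StrongDual ℝ (Lip0 M base) :=
  (dist x y)⁻¹ • (deltaF M base x - deltaF M base y)

variable (M) in
/-- The Lipschitz-free space over `M`, realized as the closed linear span of the Dirac
evaluations inside the dual of `Lip0 M base`. -/
def FreeSpace (base : M) : Submodule ℝ (StrongDual ℝ (Lip0 M base)) :=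
  (Submodule.span ℝ (Set.range (deltaF M base))).topologicalClosure

variable (M) in
/-- The subspace of the free space generated by the Diracs of a subset `S ⊆ M`. -/
def FreeSpaceOn (base : M) (S : Set M) : Submodule ℝ (StrongDual ℝ (Lip0 M base)) :=
  (Submodule.span ℝ (deltaF M base '' S)).topologicalClosure

lemma deltaF_mem (base x : M) : deltaF M base x ∈ FreeSpace M base :=
  Submodule.le_topologicalClosure _ (Submodule.subset_span ⟨x, rfl⟩)

lemma molecule_mem (base x y : M) : molecule base x y ∈ FreeSpace M base :=
  Submodule.smul_mem _ _ (Submodule.sub_mem _ (deltaF_mem base x) (deltaF_mem base y))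

/-- The molecule as an element of the free space. -/
def mol (base x y : M) : ↥(FreeSpace M base) := ⟨molecule base x y, molecule_mem base x y⟩

/-- The "magic function" of Ivakhno, Kadets and Werner associated to the pair `(p, q)`,
with base point `o`. -/
def magicFun (o p q : M) (t : M) : ℝ :=
  (dist p q / 2) *
    ((dist t q - dist t p) / (dist t q + dist t p) -
      (dist o q - dist o p) / (dist o q + dist o p))


/- With base point `q`, the magic function is `t ↦ d(p,q) · d(t,q) / (d(t,q) + d(t,p))`. The
difference quotient of `a / (a + b)` for nonnegative `1`-Lipschitz `a`, `b` is at most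
`1 / (a + b)`, and `a + b ≥ d(p,q)` by the triangle inequality. -/

theorem LipschitzWith.mul_div_add {α : Type*} [PseudoMetricSpace α] {a b : α → ℝ} {D : ℝ}
    (hD : 0 < D) (ha : LipschitzWith 1 a) (hb : LipschitzWith 1 b) (ha0 : ∀ x, 0 ≤ a x)
    (hb0 : ∀ x, 0 ≤ b x) (hab : ∀ x, D ≤ a x + b x) :
    LipschitzWith 1 fun x => D * (a x / (a x + b x)) := by
  refine LipschitzWith.of_dist_le_mul fun s t => ?_
  have hS : 0 < a s + b s := hD.trans_le (hab s)
  have hT : 0 < a t + b t := hD.trans_le (hab t)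
  have hda : |a s - a t| ≤ dist s t := by simpa [Real.dist_eq] using ha.dist_le_mul s t
  have hdb : |b t - b s| ≤ dist s t := by
    simpa [Real.dist_eq, abs_sub_comm] using hb.dist_le_mul s t
  have hnum : |a s * (a t + b t) - (a s + b s) * a t| ≤ (a t + b t) * dist s t :=
    calc |a s * (a t + b t) - (a s + b s) * a t|
        = |(a s - a t) * b t + a t * (b t - b s)| := by ring_nf
      _ ≤ |a s - a t| * b t + a t * |b t - b s| := (abs_add_le _ _).trans_eq <| by
        rw [abs_mul, abs_mul, abs_of_nonneg (ha0 t), abs_of_nonneg (hb0 t)]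
      _ ≤ dist s t * b t + a t * dist s t := by gcongr <;> simp [ha0, hb0]
      _ = (a t + b t) * dist s t := by ring
  calc dist (D * (a s / (a s + b s))) (D * (a t / (a t + b t)))
      = D * |a s * (a t + b t) - (a s + b s) * a t| / ((a s + b s) * (a t + b t)) := by
        rw [Real.dist_eq, ← mul_sub, div_sub_div _ _ hS.ne' hT.ne', abs_mul, abs_div,
          abs_of_pos hD, abs_of_pos (mul_pos hS hT), mul_div_assoc]
    _ ≤ (a s + b s) * ((a t + b t) * dist s t) / ((a s + b s) * (a t + b t)) := by
        gcongr
        exact hab s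
    _ = ↑(1 : NNReal) * dist s t := by field_simp; simp

section MagicFun

variable {M : Type*} [MetricSpace M]

lemma magicFun_self (o p q : M) : magicFun o p q o = 0 := by
  simp [magicFun]

lemma magicFun_base_right (p q t : M) :
    magicFun q p q t = dist p q * (dist t q / (dist t q + dist t p)) := by
  rcases eq_or_ne p q with rfl | hpq
  · simp [magicFun]
  have hden : dist t q + dist t p ≠ 0 :=
    ((dist_pos.2 hpq.symm).trans_le (dist_triangle_left q p t)).ne'
  simp only [magicFun, dist_self, zero_sub, zero_add, dist_comm q p,
    neg_div_self (dist_ne_zero.2 hpq)]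
  field_simp
  ring

end MagicFun

/-- Lemma 3(1): the magic function `f_{pq}` (with base point `q`) is `1`-Lipschitz and
vanishes at the base point. -/
theorem stmt_1 {M : Type*} [MetricSpace M] (p q : M) (hpq : p ≠ q) :
    LipschitzWith 1 (magicFun q p q) ∧ magicFun q p q q = 0 := by
  refine ⟨?_, magicFun_self q p q⟩
  rw [funext (magicFun_base_right p q)]
  exact LipschitzWith.mul_div_add (dist_pos.2 hpq) (LipschitzWith.dist_left q)
    (LipschitzWith.dist_left p) (fun _ => dist_nonneg) (fun _ => dist_nonneg)
    fun t => dist_comm q p ▸ dist_triangle_left q p t
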